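/- Let β be a mixed base, m ≥ 1, X ∈ ℕ^m, n = σ_β(X), h < n, and N = max{L : n_L ≠ h_L}. Suppose D ∈ ℕ^m satisfies X_{≤N} - D ∈ ℕ^m componentwise (where X_{≤N} = (x^i mod β̂_{N+1})_i), X - D ∈ ℕ^m, and σ_β(X_{≤N} - D) = h mod β̂_{N+1}. Then σ_β(X - D) = h. -/

import Mathlib

open scoped BigOperators

/-- β̂_L = β_0 ⋯ β_{L-1}, the place value of digit L in mixed base β. -/
def bhat (β : ℕ → ℕ) (L : ℕ) : ℕ := ∏ i ∈ Finset.range L, β i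

/-- The L-th digit of n in the mixed base β. -/
def mdigit (β : ℕ → ℕ) (n L : ℕ) : ℕ := n / bhat β L % β L

/-- Digit-wise addition modulo β_L in mixed base β. -/
def moplus (β : ℕ → ℕ) (n h : ℕ) : ℕ :=
  ∑ L ∈ Finset.range (n + h + 1), ((mdigit β n L + mdigit β h L) % β L) * bhat β L

/-- Digit-wise subtraction modulo β_L in mixed base β. -/
def mominus (β : ℕ → ℕ) (n h : ℕ) : ℕ :=
  ∑ L ∈ Finset.range (n + h + 1), ((β L + mdigit β n L - mdigit β h L) % β L) * bhat β L

/-- σ_β(X) = x^0 ⊕ ⋯ ⊕ x^{m-1}: the digit-wise Nim sum in mixed base β. -/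
def msigma (β : ℕ → ℕ) {m : ℕ} (X : Fin m → ℕ) : ℕ :=
  ∑ L ∈ Finset.range (∑ i, X i + 1), ((∑ i, mdigit β (X i) L) % β L) * bhat β L

/-- Hamming weight: number of nonzero components. -/
def hamwt {m : ℕ} (C : Fin m → ℕ) : ℕ := (Finset.univ.filter (fun i => C i ≠ 0)).card

/-- ord_β(n): the largest L with β̂_L ∣ n (⊤ for n = 0). -/
def mord (β : ℕ → ℕ) (n : ℕ) : ℕ∞ :=
  if n = 0 then ⊤ else (Nat.findGreatest (fun L => bhat β L ∣ n) n : ℕ∞)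

/-- 𝒞 is a Sprague-Grundy system of σ_β: its members are nonzero moves and
σ_β satisfies the mex recursion of the take-away game Γ(ℕ^m, 𝒞), i.e. σ_β is the
Sprague-Grundy function of that game. -/
def IsSGSystem (β : ℕ → ℕ) {m : ℕ} (𝒞 : Set (Fin m → ℕ)) : Prop :=
  (∀ C ∈ 𝒞, C ≠ 0) ∧
  ∀ X : Fin m → ℕ, msigma β X =
    sInf {n : ℕ | ∀ C ∈ 𝒞, (∀ i, C i ≤ X i) → msigma β (fun i => X i - C i) ≠ n}

/-!
Digit by digit. Below position `N + 1`, subtracting `D i ≤ X i % β̂_{N+1}` from `X i` happens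
entirely inside the truncation `X i % β̂_{N+1}`, so there the digits of `σ_β(X - D)` are those of
`σ_β(X_{≤N} - D) = h mod β̂_{N+1}`, i.e. those of `h`. From position `N + 1` on, the subtraction
leaves `X i / β̂_{N+1}` unchanged, so the digits of `σ_β(X - D)` are those of `n = σ_β(X)`, which
agree with those of `h` by the maximality of `N`. A number is determined by its digits.
-/

theorem Nat.sub_div_of_le_mod {a b d : ℕ} (h : d ≤ a % b) : (a - d) / b = a / b := by
  rcases b.eq_zero_or_pos with rfl | hb
  · simp
  have hsplit : a - d = (a % b - d) + b * (a / b) := by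
    have := Nat.mod_add_div a b
    omega
  rw [hsplit, Nat.add_mul_div_left _ _ hb,
    Nat.div_eq_of_lt (lt_of_le_of_lt (Nat.sub_le _ _) (Nat.mod_lt a hb)), zero_add]

section MixedBase

variable {β : ℕ → ℕ}

lemma bhat_succ (β : ℕ → ℕ) (L : ℕ) : bhat β (L + 1) = bhat β L * β L :=
  Finset.prod_range_succ _ _

lemma bhat_dvd_bhat (β : ℕ → ℕ) {K L : ℕ} (h : K ≤ L) : bhat β K ∣ bhat β L :=
  Finset.prod_dvd_prod_of_subset _ _ _ (Finset.range_subset_range.2 h)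

lemma bhat_pos (hβ : ∀ L, 2 ≤ β L) (L : ℕ) : 0 < bhat β L :=
  Finset.prod_pos fun i _ => lt_of_lt_of_le two_pos (hβ i)

lemma self_lt_bhat (hβ : ∀ L, 2 ≤ β L) (L : ℕ) : L < bhat β L := by
  induction L with
  | zero => simp [bhat]
  | succ K ih =>
    calc K + 1 < bhat β K * 2 := by omega
      _ ≤ bhat β (K + 1) := by rw [bhat_succ]; exact Nat.mul_le_mul_left _ (hβ K)

lemma mdigit_eq_zero_of_lt_bhat {a L : ℕ} (h : a < bhat β L) : mdigit β a L = 0 := by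
  rw [mdigit, Nat.div_eq_of_lt h, Nat.zero_mod]

lemma mdigit_mod_bhat {a K L : ℕ} (hLK : L < K) : mdigit β (a % bhat β K) L = mdigit β a L := by
  obtain ⟨t, ht⟩ := bhat_dvd_bhat β (Nat.succ_le_of_lt hLK)
  rw [mdigit, mdigit, ht, bhat_succ, mul_assoc, Nat.mod_mul_right_div_self,
    Nat.mod_mod_of_dvd _ (dvd_mul_right _ _)]

lemma mdigit_add_mul_bhat {a q K L : ℕ} (hLK : L < K) :
    mdigit β (a + q * bhat β K) L = mdigit β a L := by
  rw [← mdigit_mod_bhat hLK, Nat.add_mul_mod_self_right, mdigit_mod_bhat hLK]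

lemma mdigit_add_mul_bhat_self (hβ : ∀ L, 2 ≤ β L) {a L : ℕ} (ha : a < bhat β L) (q : ℕ) :
    mdigit β (a + q * bhat β L) L = q % β L := by
  rw [mdigit, Nat.add_mul_div_right _ _ (bhat_pos hβ L), Nat.div_eq_of_lt ha, zero_add]

lemma mdigit_eq_of_div_bhat_eq {a b K L : ℕ} (hKL : K ≤ L) (h : a / bhat β K = b / bhat β K) :
    mdigit β a L = mdigit β b L := by
  obtain ⟨t, ht⟩ := bhat_dvd_bhat β hKL
  rw [mdigit, mdigit, ht, ← Nat.div_div_eq_div_mul, ← Nat.div_div_eq_div_mul, h]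

lemma eq_of_mdigit_eq (hβ : ∀ L, 2 ≤ β L) {a b : ℕ} (h : ∀ L, mdigit β a L = mdigit β b L) :
    a = b := by
  have hmod : ∀ K, a % bhat β K = b % bhat β K := by
    intro K
    induction K with
    | zero => rw [bhat, Finset.prod_range_zero, Nat.mod_one, Nat.mod_one]
    | succ K ih => rw [bhat_succ, Nat.mod_mul, Nat.mod_mul, ih, ← mdigit, ← mdigit, h K]
  have hK := self_lt_bhat hβ (a + b)
  simpa [Nat.mod_eq_of_lt (show a < bhat β (a + b) by omega),
    Nat.mod_eq_of_lt (show b < bhat β (a + b) by omega)] using hmod (a + b)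

lemma sum_mul_bhat_lt {d : ℕ → ℕ} (hd : ∀ L, d L < β L) (K : ℕ) :
    ∑ j ∈ Finset.range K, d j * bhat β j < bhat β K := by
  induction K with
  | zero => simp [bhat]
  | succ K ih =>
    rw [Finset.sum_range_succ, bhat_succ]
    calc ∑ j ∈ Finset.range K, d j * bhat β j + d K * bhat β K
        < (d K + 1) * bhat β K := by rw [add_one_mul]; omega
      _ ≤ bhat β K * β K := by rw [mul_comm]; exact Nat.mul_le_mul_left _ (hd K)

lemma mdigit_sum_mul_bhat (hβ : ∀ L, 2 ≤ β L) {d : ℕ → ℕ} (hd : ∀ L, d L < β L) (K L : ℕ) :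
    mdigit β (∑ j ∈ Finset.range K, d j * bhat β j) L = if L < K then d L else 0 := by
  induction K with
  | zero => simp [mdigit]
  | succ K ih =>
    rw [Finset.sum_range_succ]
    rcases lt_trichotomy L K with hLK | rfl | hKL
    · rw [mdigit_add_mul_bhat hLK, ih, if_pos hLK, if_pos (by omega)]
    · rw [mdigit_add_mul_bhat_self hβ (sum_mul_bhat_lt hd L), Nat.mod_eq_of_lt (hd L),
        if_pos (by omega)]
    · rw [← Finset.sum_range_succ, if_neg (by omega)]
      exact mdigit_eq_zero_of_lt_bhat <| lt_of_lt_of_le (sum_mul_bhat_lt hd _)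
        (Nat.le_of_dvd (bhat_pos hβ L) (bhat_dvd_bhat β hKL))

lemma mdigit_msigma (hβ : ∀ L, 2 ≤ β L) {m : ℕ} (X : Fin m → ℕ) (L : ℕ) :
    mdigit β (msigma β X) L = (∑ i, mdigit β (X i) L) % β L := by
  rw [msigma, mdigit_sum_mul_bhat hβ (fun L => Nat.mod_lt _ (lt_of_lt_of_le two_pos (hβ L)))]
  split_ifs with hL
  · rfl
  · have hzero : ∀ i, mdigit β (X i) L = 0 := fun i =>
      mdigit_eq_zero_of_lt_bhat <| lt_of_lt_of_le (Nat.lt_of_le_of_lt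
        (Finset.single_le_sum (fun j _ => Nat.zero_le (X j)) (Finset.mem_univ i)) (by omega))
        (self_lt_bhat hβ L).le
    simp [hzero]

lemma mdigit_msigma_congr (hβ : ∀ L, 2 ≤ β L) {m L : ℕ} {X Y : Fin m → ℕ}
    (h : ∀ i, mdigit β (X i) L = mdigit β (Y i) L) :
    mdigit β (msigma β X) L = mdigit β (msigma β Y) L := by
  simp only [mdigit_msigma hβ, h]

end MixedBase

theorem stmt15_general (β : ℕ → ℕ) (hβ : ∀ L, 2 ≤ β L) {m : ℕ}
    (X D : Fin m → ℕ) (n h N : ℕ) (hn : n = msigma β X)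
    (hNmax : ∀ L, N < L → mdigit β n L = mdigit β h L)
    (hDle : ∀ i, D i ≤ X i % bhat β (N + 1))
    (hDcov : msigma β (fun i => X i % bhat β (N + 1) - D i) = h % bhat β (N + 1)) :
    msigma β (fun i => X i - D i) = h := by
  refine eq_of_mdigit_eq hβ fun L => ?_
  rcases le_or_gt L N with hL | hL
  · have hlow : L < N + 1 := Nat.lt_succ_of_le hL
    rw [← mdigit_mod_bhat hlow (a := h), ← hDcov]
    refine mdigit_msigma_congr hβ fun i => ?_
    rw [← mdigit_mod_bhat hlow, ← Nat.mod_sub_of_le (hDle i)]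
  · rw [← hNmax L hL, hn]
    exact mdigit_msigma_congr hβ fun i =>
      mdigit_eq_of_div_bhat_eq hL (Nat.sub_div_of_le_mod (hDle i))

/-- If D covers the truncation X_{≤N} at h mod β̂_{N+1}, where N is the top
digit where n and h differ, then D covers X at h. -/
theorem stmt15 (β : ℕ → ℕ) (hβ : ∀ L, 2 ≤ β L) {m : ℕ} (hm : 1 ≤ m)
    (X D : Fin m → ℕ) (n h N : ℕ) (hn : n = msigma β X) (hh : h < n)
    (hN : mdigit β n N ≠ mdigit β h N)
    (hNmax : ∀ L, N < L → mdigit β n L = mdigit β h L)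
    (hDle : ∀ i, D i ≤ X i % bhat β (N + 1))
    (hDle' : ∀ i, D i ≤ X i)
    (hDcov : msigma β (fun i => X i % bhat β (N + 1) - D i) = h % bhat β (N + 1)) :
    msigma β (fun i => X i - D i) = h :=
  stmt15_general β hβ X D n h N hn hNmax hDle hDcov
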